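/- In the Point Algebra over ℝ, every path consistent atomic network is consistent: if θᵢⱼ ∈ {<,=,>} for 1 ≤ i,j ≤ n with θᵢᵢ is =, θⱼᵢ the converse of θᵢⱼ, and θᵢⱼ ⊆ θᵢₖ∘θₖⱼ for all i,j,k, then there exist real numbers a₁,…,aₙ with (aᵢ,aⱼ) ∈ θᵢⱼ for all i,j. -/

import Mathlib

def PA.comp (R S : Set (ℝ × ℝ)) : Set (ℝ × ℝ) :=
  {p | ∃ z : ℝ, (p.1, z) ∈ R ∧ (z, p.2) ∈ S}

def PA.conv (R : Set (ℝ × ℝ)) : Set (ℝ × ℝ) := {p | (p.2, p.1) ∈ R}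

def PA.lt : Set (ℝ × ℝ) := {p | p.1 < p.2}
def PA.gt : Set (ℝ × ℝ) := {p | p.2 < p.1}
def PA.eq : Set (ℝ × ℝ) := {p | p.1 = p.2}

/-! The relation "θ i j is `<` or `=`" is a total preorder on the indices, because path
consistency makes `<` followed by `<` or `=` compose to `<`. Placing each point at the number
of indices strictly below it therefore realises every constraint: `=` gives the same set of
strict predecessors, and `<` a strictly larger one, as `i` itself becomes a predecessor of `j`. -/

namespace PA

lemma conv_eq : conv eq = eq := by
  ext p
  exact eq_comm

lemma conv_gt : conv gt = lt := rfl

lemma lt_ne_eq : lt ≠ eq := fun h =>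
  lt_irrefl (0 : ℝ) (h ▸ rfl : ((0 : ℝ), (0 : ℝ)) ∈ lt)

lemma comp_lt_subset_lt {S : Set (ℝ × ℝ)} (hS : S = lt ∨ S = eq) : comp lt S ⊆ lt := by
  rintro ⟨x, y⟩ ⟨z, hxz, hzy⟩
  change x < z at hxz
  rcases hS with rfl | rfl
  · exact hxz.trans hzy
  · exact (show z = y from hzy) ▸ hxz

lemma eq_lt_of_subset_lt {R : Set (ℝ × ℝ)} (hR : R ∈ ({lt, eq, gt} : Set (Set (ℝ × ℝ))))
    (h : R ⊆ lt) : R = lt := by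
  rcases hR with rfl | rfl | rfl
  · rfl
  · exact (lt_irrefl (0 : ℝ) (h (rfl : ((0 : ℝ), (0 : ℝ)) ∈ eq))).elim
  · have h10 : ((1 : ℝ), (0 : ℝ)) ∈ gt := show (0 : ℝ) < 1 from zero_lt_one
    exact (lt_asymm (α := ℝ) (h h10) zero_lt_one).elim

section Network

variable {ι : Type*} {θ : ι → ι → Set (ℝ × ℝ)}

lemma lt_of_lt_of_path_consistent
    (hbasic : ∀ i j, θ i j ∈ ({lt, eq, gt} : Set (Set (ℝ × ℝ))))
    (hpc : ∀ i j k, θ i j ⊆ comp (θ i k) (θ k j)) {i j k : ι}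
    (hki : θ k i = lt) (hij : θ i j = lt ∨ θ i j = eq) : θ k j = lt :=
  eq_lt_of_subset_lt (hbasic k j) ((hpc k j i).trans (hki ▸ comp_lt_subset_lt hij))

def predecessors (θ : ι → ι → Set (ℝ × ℝ)) (i : ι) : Set ι :=
  {k | θ k i = lt}

lemma predecessors_subset
    (hbasic : ∀ i j, θ i j ∈ ({lt, eq, gt} : Set (Set (ℝ × ℝ))))
    (hpc : ∀ i j k, θ i j ⊆ comp (θ i k) (θ k j)) {i j : ι}
    (hij : θ i j = lt ∨ θ i j = eq) : predecessors θ i ⊆ predecessors θ j :=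
  fun _ hki => lt_of_lt_of_path_consistent hbasic hpc hki hij

lemma predecessors_eq_of_eq
    (hbasic : ∀ i j, θ i j ∈ ({lt, eq, gt} : Set (Set (ℝ × ℝ))))
    (hsym : ∀ i j, θ j i = conv (θ i j))
    (hpc : ∀ i j k, θ i j ⊆ comp (θ i k) (θ k j)) {i j : ι}
    (hij : θ i j = eq) : predecessors θ i = predecessors θ j := by
  have hji : θ j i = eq := by rw [hsym, hij, conv_eq]
  exact (predecessors_subset hbasic hpc (Or.inr hij)).antisymm
    (predecessors_subset hbasic hpc (Or.inr hji))

lemma predecessors_ssubset_of_lt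
    (hbasic : ∀ i j, θ i j ∈ ({lt, eq, gt} : Set (Set (ℝ × ℝ))))
    (hrefl : ∀ i, θ i i = eq)
    (hpc : ∀ i j k, θ i j ⊆ comp (θ i k) (θ k j)) {i j : ι}
    (hij : θ i j = lt) : predecessors θ i ⊂ predecessors θ j :=
  (Set.ssubset_iff_of_subset (predecessors_subset hbasic hpc (Or.inl hij))).2
    ⟨i, hij, fun hii => lt_ne_eq (hii.symm.trans (hrefl i))⟩

end Network

end PA

/-- every path consistent atomic network over the Point Algebra
is consistent. -/
theorem PA_path_consistent_atomic_network_consistent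
    (n : ℕ) (θ : Fin n → Fin n → Set (ℝ × ℝ))
    (hbasic : ∀ i j, θ i j ∈ ({PA.lt, PA.eq, PA.gt} : Set (Set (ℝ × ℝ))))
    (hrefl : ∀ i, θ i i = PA.eq)
    (hsym : ∀ i j, θ j i = PA.conv (θ i j))
    (hpc : ∀ i j k, θ i j ⊆ PA.comp (θ i k) (θ k j)) :
    ∃ a : Fin n → ℝ, ∀ i j, (a i, a j) ∈ θ i j := by
  have rank_lt : ∀ {i j}, θ i j = PA.lt →
      ((PA.predecessors θ i).ncard : ℝ) < (PA.predecessors θ j).ncard := fun hij => by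
    exact_mod_cast Set.ncard_lt_ncard
      (PA.predecessors_ssubset_of_lt hbasic hrefl hpc hij) (Set.toFinite _)
  refine ⟨fun i => (PA.predecessors θ i).ncard, fun i j => ?_⟩
  rcases hbasic i j with h | h | h <;> rw [h]
  · exact rank_lt h
  · exact congrArg (fun s => (s.ncard : ℝ)) (PA.predecessors_eq_of_eq hbasic hsym hpc h)
  · exact rank_lt (by rw [hsym, h, PA.conv_gt])
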